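/- Let a, b : H × H → ℝ be symmetric bilinear forms on a real inner product space H with a(v, v) ≥ 0 and suppose c₀ a(v, v) ≤ s(v, v) ≤ c₁ a(v, v) for all v in a subspace K, where s is a symmetric positive semidefinite bilinear form and 0 < c₀ ≤ c₁. Define a^h(u, v) := a(Πu, Πv) + s((I − Π)u, (I − Π)v), where Π : H → H is a projection (Π² = Π) onto a subspace P with (I − Π)H ⊆ K and a(Πu, (I−Π)v) = 0 for all u, v. Then min(1, c₀) a(v, v) ≤ a^h(v, v) ≤ max(1, c₁) a(v, v) for all v ∈ H. -/

import Mathlib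

/-!
Since `Π` is `a`-orthogonal, `a(v,v)` splits as `a(Πv,Πv) + a((I-Π)v,(I-Π)v)` with both terms
nonnegative. The discrete form `a^h` keeps the first term and replaces the second by
`s((I-Π)v,(I-Π)v)`, which the kernel bounds compare with `a((I-Π)v,(I-Π)v)` up to the factors
`c₀` and `c₁`; the first term is compared with the factor `1`.
-/

namespace LinearMap

theorem apply_add_add_of_apply_eq_zero {R M : Type*} [CommSemiring R] [AddCommMonoid M]
    [Module R M] (B : M →ₗ[R] M →ₗ[R] R) {x y : M} (hxy : B x y = 0) (hyx : B y x = 0) :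
    B (x + y) (x + y) = B x x + B y y := by
  simp only [map_add, add_apply, hxy, hyx, add_zero, zero_add]

theorem apply_self_eq_apply_proj_add_apply_sub_proj {R M : Type*} [CommRing R]
    [AddCommGroup M] [Module R M] (B : M →ₗ[R] M →ₗ[R] R) (P : M →ₗ[R] M)
    (hB : ∀ u v, B u v = B v u) (horth : ∀ u v, B (P u) (v - P v) = 0) (v : M) :
    B v v = B (P v) (P v) + B (v - P v) (v - P v) := by
  conv_lhs => rw [← add_sub_cancel (P v) v]
  exact B.apply_add_add_of_apply_eq_zero (horth v v) (by rw [hB, horth])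

end LinearMap

section

variable {α : Type*} [Semiring α] [LinearOrder α] [IsOrderedRing α] {p q r c : α}

theorem min_one_mul_add_le_add (hp : 0 ≤ p) (hq : 0 ≤ q) (h : c * q ≤ r) :
    min 1 c * (p + q) ≤ p + r := by
  rw [mul_add]
  gcongr
  · exact mul_le_of_le_one_left hp (min_le_left _ _)
  · exact (mul_le_mul_of_nonneg_right (min_le_right _ _) hq).trans h

theorem add_le_max_one_mul_add (hp : 0 ≤ p) (hq : 0 ≤ q) (h : r ≤ c * q) :
    p + r ≤ max 1 c * (p + q) := by
  rw [mul_add]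
  gcongr
  · exact le_mul_of_one_le_left hp (le_max_left _ _)
  · exact h.trans (mul_le_mul_of_nonneg_right (le_max_right _ _) hq)

end

theorem vem_stability_general {H : Type*} [AddCommGroup H] [Module ℝ H]
    (a s : H →ₗ[ℝ] H →ₗ[ℝ] ℝ) (K : Submodule ℝ H) (Proj : H →ₗ[ℝ] H)
    (c₀ c₁ : ℝ)
    (ha_sym : ∀ u v, a u v = a v u) (ha_pos : ∀ v, 0 ≤ a v v)
    (hker : ∀ v, v - Proj v ∈ K)
    (horth : ∀ u v, a (Proj u) (v - Proj v) = 0)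
    (hlow : ∀ v ∈ K, c₀ * a v v ≤ s v v) (hupp : ∀ v ∈ K, s v v ≤ c₁ * a v v) :
    ∀ v, min 1 c₀ * a v v ≤ a (Proj v) (Proj v) + s (v - Proj v) (v - Proj v) ∧
      a (Proj v) (Proj v) + s (v - Proj v) (v - Proj v) ≤ max 1 c₁ * a v v := by
  intro v
  rw [a.apply_self_eq_apply_proj_add_apply_sub_proj Proj ha_sym horth v]
  exact ⟨min_one_mul_add_le_add (ha_pos _) (ha_pos _) (hlow _ (hker v)),
    add_le_max_one_mul_add (ha_pos _) (ha_pos _) (hupp _ (hker v))⟩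

/-- Stability of the VEM discrete bilinear form: if `s` is a stabilization satisfying a
two-sided bound by `a` on the kernel `K ⊇ range (I - Proj)` of the `a`-orthogonal projection
`Proj`, then `a^h(v,v) := a(Projv,Projv) + s((I-Proj)v,(I-Proj)v)` satisfies
`min 1 c₀ · a(v,v) ≤ a^h(v,v) ≤ max 1 c₁ · a(v,v)`. -/
theorem vem_stability {H : Type*} [AddCommGroup H] [Module ℝ H]
    (a s : H →ₗ[ℝ] H →ₗ[ℝ] ℝ) (K : Submodule ℝ H) (Proj : H →ₗ[ℝ] H)
    (c₀ c₁ : ℝ) (hc₀ : 0 < c₀) (hc₀₁ : c₀ ≤ c₁)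
    (ha_sym : ∀ u v, a u v = a v u) (ha_pos : ∀ v, 0 ≤ a v v)
    (hs_sym : ∀ u v, s u v = s v u) (hs_pos : ∀ v, 0 ≤ s v v)
    (hproj : ∀ v, Proj (Proj v) = Proj v)
    (hker : ∀ v, v - Proj v ∈ K)
    (horth : ∀ u v, a (Proj u) (v - Proj v) = 0)
    (hlow : ∀ v ∈ K, c₀ * a v v ≤ s v v) (hupp : ∀ v ∈ K, s v v ≤ c₁ * a v v) :
    ∀ v, min 1 c₀ * a v v ≤ a (Proj v) (Proj v) + s (v - Proj v) (v - Proj v) ∧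
      a (Proj v) (Proj v) + s (v - Proj v) (v - Proj v) ≤ max 1 c₁ * a v v :=
  vem_stability_general a s K Proj c₀ c₁ ha_sym ha_pos hker horth hlow hupp
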